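/- Let A and D be real 2n×2n matrices such that Ã := −(A + Aᵀ) is positive definite and D is symmetric positive semidefinite, and let σ be a real symmetric positive semidefinite 2n×2n matrix satisfying Aσ + σAᵀ + D ≥ 0. Then the largest eigenvalue of σ satisfies λ₁↓ ≤ δ₁↓ / α₁↑, where α₁↑ is the smallest eigenvalue of Ã and δ₁↓ is the largest eigenvalue of D. -/

import Mathlib

open Matrix
open scoped ComplexOrder

open Classical in
/-- The eigenvalues of a matrix in increasing order (junk value `0` if not Hermitian). -/
noncomputable def eigUp {d : ℕ} (M : Matrix (Fin d) (Fin d) ℝ) : Fin d → ℝ :=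
  if h : M.IsHermitian then h.eigenvalues ∘ Tuple.sort h.eigenvalues else 0

/-- The eigenvalues of a matrix in decreasing order. -/
noncomputable def eigDown {d : ℕ} (M : Matrix (Fin d) (Fin d) ℝ) (j : Fin d) : ℝ :=
  eigUp M j.rev

/-- The standard symplectic form on `2n` canonical variables: block diagonal with
blocks `[[0,1],[-1,0]]`. -/
def Omega (n : ℕ) : Matrix (Fin (2*n)) (Fin (2*n)) ℝ :=
  Matrix.of fun i j =>
    if (i : ℕ) + 1 = (j : ℕ) ∧ (i : ℕ) % 2 = 0 then 1
    else if (j : ℕ) + 1 = (i : ℕ) ∧ (j : ℕ) % 2 = 0 then -1 else 0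

/-- Partial transposition matrix `T = 𝟙₂^{⊕ l} ⊕ σz^{⊕ (n-l)}` for the bipartition of the
first `l` versus the last `n - l` modes. -/
def Tmat (n l : ℕ) : Matrix (Fin (2*n)) (Fin (2*n)) ℝ :=
  Matrix.diagonal fun i => if (i : ℕ) / 2 < l ∨ (i : ℕ) % 2 = 0 then 1 else -1

/-- The partially transposed symplectic form `Ω̃ = T Ω T`. -/
def OmegaPT (n l : ℕ) : Matrix (Fin (2*n)) (Fin (2*n)) ℝ :=
  Tmat n l * Omega n * Tmat n l

open Classical in
/-- The positive square root of a positive semidefinite matrix (junk value `0` otherwise). -/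
noncomputable def msqrt {d : ℕ} (M : Matrix (Fin d) (Fin d) ℝ) : Matrix (Fin d) (Fin d) ℝ :=
  if h : M.PosSemidef then
    (h.1.eigenvectorUnitary : Matrix (Fin d) (Fin d) ℝ) *
      diagonal ((↑) ∘ (Real.sqrt ·) ∘ h.1.eigenvalues) *
      (star h.1.eigenvectorUnitary : Matrix (Fin d) (Fin d) ℝ)
  else 0

/-- `σ + iΩ ≥ 0`: the Robertson–Schrödinger condition for a real symmetric matrix `σ`
to be a bona fide covariance matrix. -/
def IsCM (n : ℕ) (σ : Matrix (Fin (2*n)) (Fin (2*n)) ℝ) : Prop :=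
  σ.IsSymm ∧
    (σ.map (Complex.ofReal ·) + Complex.I • (Omega n).map (Complex.ofReal ·)).PosSemidef

/-- `ν̃₋²`, the square of the smallest partially transposed symplectic eigenvalue of `σ`, for
the bipartition of the first `l` versus the remaining modes: the smallest eigenvalue of
`σ^{1/2} Ω̃ᵀ σ Ω̃ σ^{1/2}`. -/
noncomputable def nuSq (n l : ℕ) (σ : Matrix (Fin (2*n)) (Fin (2*n)) ℝ) : ℝ :=
  sInf (spectrum ℝ (msqrt σ * (OmegaPT n l)ᵀ * σ * OmegaPT n l * msqrt σ))

/-- `ν̃₋`, the smallest partially transposed symplectic eigenvalue of `σ`. -/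
noncomputable def nuMin (n l : ℕ) (σ : Matrix (Fin (2*n)) (Fin (2*n)) ℝ) : ℝ :=
  Real.sqrt (nuSq n l σ)

/-- The logarithmic negativity `E_N(σ) = max (0, −log₂ ν̃₋)`. -/
noncomputable def logNeg (n l : ℕ) (σ : Matrix (Fin (2*n)) (Fin (2*n)) ℝ) : ℝ :=
  max 0 (-(Real.logb 2 (nuMin n l σ)))

/-!
Let `v` be a unit eigenvector of `σ` for its largest eigenvalue `λ`. As `σ` is symmetric,
`vᵀ(Aσ + σAᵀ)v = -λ vᵀÃv`, so testing the Lyapunov inequality on `v` gives `λ vᵀÃv ≤ vᵀDv`.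
The Rayleigh bounds `α₁↑ ≤ vᵀÃv` and `vᵀDv ≤ δ₁↓`, together with `λ ≥ 0` and `α₁↑ > 0`,
then give `λ α₁↑ ≤ δ₁↓`.
-/

open scoped MatrixOrder

namespace Matrix

section RCLike

variable {n 𝕜 : Type*} [Fintype n] [RCLike 𝕜]

lemma star_dotProduct_mulVec_mono {A B : Matrix n n 𝕜} (h : A ≤ B) (x : n → 𝕜) :
    star x ⬝ᵥ A *ᵥ x ≤ star x ⬝ᵥ B *ᵥ x := by
  simpa [sub_mulVec, dotProduct_sub] using (le_iff.mp h).dotProduct_mulVec_nonneg x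

variable [DecidableEq n] {M : Matrix n n 𝕜}

lemma IsHermitian.smul_star_dotProduct_self_le (hM : M.IsHermitian) {c : ℝ}
    (h : ∀ i, c ≤ hM.eigenvalues i) (x : n → 𝕜) :
    c • (star x ⬝ᵥ x) ≤ star x ⬝ᵥ M *ᵥ x := by
  have hle : algebraMap ℝ (Matrix n n 𝕜) c ≤ M := by
    rw [algebraMap_le_iff_le_spectrum (a := M) hM, hM.spectrum_real_eq_range_eigenvalues]
    rintro _ ⟨i, rfl⟩
    exact h i
  simpa [Algebra.algebraMap_eq_smul_one, smul_mulVec, dotProduct_smul] using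
    star_dotProduct_mulVec_mono hle x

lemma IsHermitian.star_dotProduct_mulVec_le_smul (hM : M.IsHermitian) {c : ℝ}
    (h : ∀ i, hM.eigenvalues i ≤ c) (x : n → 𝕜) :
    star x ⬝ᵥ M *ᵥ x ≤ c • (star x ⬝ᵥ x) := by
  have hle : M ≤ algebraMap ℝ (Matrix n n 𝕜) c := by
    rw [le_algebraMap_iff_spectrum_le (a := M) hM, hM.spectrum_real_eq_range_eigenvalues]
    rintro _ ⟨i, rfl⟩
    exact h i
  simpa [Algebra.algebraMap_eq_smul_one, smul_mulVec, dotProduct_smul] using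
    star_dotProduct_mulVec_mono hle x

lemma IsHermitian.star_dotProduct_eigenvectorBasis_self (hM : M.IsHermitian) (i : n) :
    star ⇑(hM.eigenvectorBasis i) ⬝ᵥ ⇑(hM.eigenvectorBasis i) = 1 := by
  rw [dotProduct_comm, ← EuclideanSpace.inner_eq_star_dotProduct,
    inner_self_eq_norm_sq_to_K, hM.eigenvectorBasis.orthonormal.1 i]
  simp

end RCLike

section Lyapunov

variable {n : Type*} [Fintype n]

lemma dotProduct_mul_add_mul_transpose_mulVec_of_eigenvector {A S : Matrix n n ℝ}
    (hS : S.IsSymm) {μ : ℝ} {v : n → ℝ} (hv : S *ᵥ v = μ • v) :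
    v ⬝ᵥ (A * S + S * Aᵀ) *ᵥ v = μ * (v ⬝ᵥ (A + Aᵀ) *ᵥ v) := by
  have hvS : v ᵥ* S = μ • v := by rw [← mulVec_transpose, hS.eq, hv]
  rw [add_mulVec, ← mulVec_mulVec, ← mulVec_mulVec, hv, dotProduct_add,
    dotProduct_mulVec v S, hvS, mulVec_smul, dotProduct_smul, smul_dotProduct, add_mulVec,
    dotProduct_add, smul_eq_mul, smul_eq_mul, mul_add]

lemma eigenvalue_mul_le_of_lyapunov {A D S : Matrix n n ℝ} (hS : S.IsSymm)
    (hLyap : (A * S + S * Aᵀ + D).PosSemidef) {μ : ℝ} {v : n → ℝ} (hv : S *ᵥ v = μ • v) :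
    μ * (v ⬝ᵥ (-(A + Aᵀ)) *ᵥ v) ≤ v ⬝ᵥ D *ᵥ v := by
  have h := hLyap.dotProduct_mulVec_nonneg v
  rw [star_trivial, add_mulVec, dotProduct_add,
    dotProduct_mul_add_mul_transpose_mulVec_of_eigenvector hS hv] at h
  rw [neg_mulVec, dotProduct_neg]
  linarith

end Lyapunov

section SortedEigenvalues

variable {d : ℕ} {M : Matrix (Fin d) (Fin d) ℝ}

lemma IsHermitian.range_eigUp (hM : M.IsHermitian) :
    Set.range (eigUp M) = Set.range hM.eigenvalues := by
  rw [eigUp, dif_pos hM]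
  exact EquivLike.range_comp _ _

lemma IsHermitian.monotone_eigUp (hM : M.IsHermitian) : Monotone (eigUp M) := by
  rw [eigUp, dif_pos hM]
  exact Tuple.monotone_sort _

lemma IsHermitian.eigUp_zero_le (hM : M.IsHermitian) (hd : 0 < d) (i : Fin d) :
    eigUp M ⟨0, hd⟩ ≤ hM.eigenvalues i := by
  obtain ⟨j, hj⟩ := hM.range_eigUp.ge ⟨i, rfl⟩
  exact hj ▸ hM.monotone_eigUp (Fin.mk_le_of_le_val (Nat.zero_le _))

lemma IsHermitian.eigenvalues_le_eigDown_zero (hM : M.IsHermitian) (hd : 0 < d)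
    (i : Fin d) : hM.eigenvalues i ≤ eigDown M ⟨0, hd⟩ := by
  obtain ⟨j, hj⟩ := hM.range_eigUp.ge ⟨i, rfl⟩
  exact hj ▸ hM.monotone_eigUp
    (by rw [Fin.le_def, Fin.val_rev]; exact Nat.le_sub_one_of_lt j.isLt)

lemma IsHermitian.eigUp_mem_range_eigenvalues (hM : M.IsHermitian) (j : Fin d) :
    eigUp M j ∈ Set.range hM.eigenvalues :=
  hM.range_eigUp ▸ ⟨j, rfl⟩

lemma IsHermitian.eigDown_mem_range_eigenvalues (hM : M.IsHermitian) (j : Fin d) :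
    eigDown M j ∈ Set.range hM.eigenvalues :=
  hM.eigUp_mem_range_eigenvalues j.rev

end SortedEigenvalues

end Matrix

/-- If `Ã := −(A + Aᵀ)` is positive definite, `D` is positive semidefinite, and the positive
semidefinite `σ` satisfies `Aσ + σAᵀ + D ≥ 0`, then the largest eigenvalue of `σ` satisfies
`λ₁↓ ≤ δ₁↓ / α₁↑`. -/
theorem lyapunov_largest_eigenvalue_bound (n : ℕ) (hn : 1 ≤ n)
    (A D σ : Matrix (Fin (2*n)) (Fin (2*n)) ℝ)
    (hA : (-(A + Aᵀ)).PosDef) (hD : D.PosSemidef) (hσ : σ.PosSemidef)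
    (hLyap : (A * σ + σ * Aᵀ + D).PosSemidef) :
    eigDown σ ⟨0, by omega⟩ ≤ eigDown D ⟨0, by omega⟩ / eigUp (-(A + Aᵀ)) ⟨0, by omega⟩ := by
  have hd : 0 < 2 * n := by omega
  obtain ⟨i, hi⟩ := hσ.1.eigDown_mem_range_eigenvalues ⟨0, hd⟩
  set v : Fin (2 * n) → ℝ := ⇑(hσ.1.eigenvectorBasis i)
  have hv : σ *ᵥ v = eigDown σ ⟨0, hd⟩ • v := hi ▸ hσ.1.mulVec_eigenvectorBasis i
  have hvv : v ⬝ᵥ v = 1 := hσ.1.star_dotProduct_eigenvectorBasis_self i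
  have hα : eigUp (-(A + Aᵀ)) ⟨0, hd⟩ ≤ v ⬝ᵥ (-(A + Aᵀ)) *ᵥ v := by
    simpa [hvv] using hA.1.smul_star_dotProduct_self_le (hA.1.eigUp_zero_le hd) v
  have hδ : v ⬝ᵥ D *ᵥ v ≤ eigDown D ⟨0, hd⟩ := by
    simpa [hvv] using hD.1.star_dotProduct_mulVec_le_smul (hD.1.eigenvalues_le_eigDown_zero hd) v
  have hμ : 0 ≤ eigDown σ ⟨0, hd⟩ := hi ▸ hσ.eigenvalues_nonneg i
  have hα₀ : 0 < eigUp (-(A + Aᵀ)) ⟨0, hd⟩ := by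
    obtain ⟨k, hk⟩ := hA.1.eigUp_mem_range_eigenvalues ⟨0, hd⟩
    exact hk ▸ hA.eigenvalues_pos k
  rw [le_div_iff₀ hα₀]
  calc eigDown σ ⟨0, hd⟩ * eigUp (-(A + Aᵀ)) ⟨0, hd⟩
      ≤ eigDown σ ⟨0, hd⟩ * (v ⬝ᵥ (-(A + Aᵀ)) *ᵥ v) := mul_le_mul_of_nonneg_left hα hμ
    _ ≤ v ⬝ᵥ D *ᵥ v := eigenvalue_mul_le_of_lyapunov hσ.1 hLyap hv
    _ ≤ eigDown D ⟨0, hd⟩ := hδ
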